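/- Let E ⊆ K[X] and 𝔖 ⊆ TO(M). Then MIN_E(𝔖) is a closed subset of 𝔖 (in the subspace topology). Hence, if 𝔖 is closed in TO(M), then MIN_E(𝔖) is compact. -/

import Mathlib

/-- A binary relation is a total ordering: antisymmetric, transitive, and total. -/
def IsTotalOrdering {S : Type*} (r : S → S → Prop) : Prop :=
  (∀ a b, r a b → r b a → a = b) ∧ (∀ a b c, r a b → r b c → r a c) ∧ (∀ a b, r a b ∨ r b a)

/-- The set `TO(S)` of all total orderings on `S`. -/
def TO (S : Type*) : Type _ := {r : S → S → Prop // IsTotalOrdering r}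

/-- The topology `𝒰(S)` on `TO(S)`, generated by the subbasis of all sets
`U_{(a,b)} = {≤ ∈ TO(S) : a ≤ b}`. -/
instance TOTopology (S : Type*) : TopologicalSpace (TO S) :=
  TopologicalSpace.generateFrom {U | ∃ a b : S, U = {r : TO S | r.1 a b}}
/-- Monomials of `K[X_1,…,X_t]`, identified with their exponent vectors `ν ∈ ℕ^t`. -/
abbrev Mon (t : ℕ) := Fin t →₀ ℕ

/-- `LM` is a leading-monomial function: for each total ordering `r` on monomials and each
nonzero polynomial `p`, `LM r p` is the `r`-maximal element of the support of `p`. -/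
def IsLM (K : Type*) [Field K] (t : ℕ)
    (LM : TO (Mon t) → MvPolynomial (Fin t) K → Mon t) : Prop :=
  ∀ (r : TO (Mon t)) (p : MvPolynomial (Fin t) K), p ≠ 0 →
    LM r p ∈ p.support ∧ ∀ m ∈ p.support, r.1 m (LM r p)

/-- The leading monomial ideal `LM_≤(E)` of a subset `E ⊆ K[X]`: the ideal generated by the
leading monomials of the nonzero elements of `E`. -/
noncomputable def LMideal (K : Type*) [Field K] (t : ℕ)
    (LM : TO (Mon t) → MvPolynomial (Fin t) K → Mon t)
    (r : TO (Mon t)) (E : Set (MvPolynomial (Fin t) K)) : Ideal (MvPolynomial (Fin t) K) :=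
  Ideal.span {q | ∃ e ∈ E, e ≠ 0 ∧ q = MvPolynomial.monomial (LM r e) (1 : K)}

/-- `MIN_E(𝔖)`: the set of orderings `≤ ∈ 𝔖` such that `LM_≤(E)` is minimal with respect to
inclusion among the leading monomial ideals `{LM_≤'(E) : ≤' ∈ 𝔖}`. -/
def MINset (K : Type*) [Field K] (t : ℕ)
    (LM : TO (Mon t) → MvPolynomial (Fin t) K → Mon t)
    (E : Set (MvPolynomial (Fin t) K)) (S : Set (TO (Mon t))) : Set (TO (Mon t)) :=
  {r | r ∈ S ∧ ∀ r' ∈ S, LMideal K t LM r' E ≤ LMideal K t LM r E →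
    LMideal K t LM r' E = LMideal K t LM r E}


/-!
`TO(S)` is a closed subspace of the Cantor cube `Bool^(S × S)`, hence compact. By the Hilbert
basis theorem, `LM_≤(E)` is generated by the leading monomials of finitely many `e ∈ E`; the
leading monomial of a fixed `e` is locally constant in `≤` (only finitely many comparisons
decide it), so near `≤` every `LM_≤'(E)` contains `LM_≤(E)`. If `≤ ∉ MIN_E(𝔖)`, some
`≤'' ∈ 𝔖` has `LM_≤''(E) ⊊ LM_≤(E)`, witnessed by a leading monomial `LM_≤(e) ∉ LM_≤''(E)`;
nearby orderings keep both properties, so they are not minimal either.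
-/

open Topology Filter

namespace TO

variable {S : Type*}

lemma refl (r : TO S) (a : S) : r.1 a a := (r.2.2.2 a a).elim id id

lemma isOpen_setOf_rel (a b : S) : IsOpen {r : TO S | r.1 a b} :=
  TopologicalSpace.isOpen_generateFrom_of_mem ⟨a, b, rfl⟩

lemma isClosed_setOf_rel (a b : S) : IsClosed {r : TO S | r.1 a b} := by
  by_cases h : a = b
  · subst h
    simp only [refl]
    exact isClosed_univ
  · have : {r : TO S | r.1 a b} = {r : TO S | r.1 b a}ᶜ := by
      ext r
      exact ⟨fun hab hba => h (r.2.1 a b hab hba), (r.2.2.2 a b).resolve_right⟩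
    rw [this]
    exact (isOpen_setOf_rel b a).isClosed_compl

lemma eventually_rel {r : TO S} {a b : S} (h : r.1 a b) : ∀ᶠ s in 𝓝 r, s.1 a b :=
  (isOpen_setOf_rel a b).eventually_mem h

open Classical in
noncomputable def toBool (r : TO S) : S × S → Bool := fun p => decide (r.1 p.1 p.2)

lemma toBool_eq_true {r : TO S} {a b : S} : toBool r (a, b) = true ↔ r.1 a b := by
  simp [toBool]

lemma toBool_injective : Function.Injective (toBool (S := S)) := by
  intro r r' h
  apply Subtype.ext
  funext a b
  apply propext
  rw [← toBool_eq_true, ← toBool_eq_true (r := r'), h]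

lemma isClopen_setOf_apply_eq_true (p : S × S) : IsClopen {f : S × S → Bool | f p = true} :=
  (isClopen_discrete {true}).preimage (continuous_apply p : Continuous fun f : S × S → Bool => f p)

lemma isInducing_toBool : IsInducing (toBool (S := S)) := by
  rw [isInducing_iff]
  refine le_antisymm ?_ (le_generateFrom ?_)
  · rw [← continuous_iff_le_induced]
    refine continuous_pi fun p => continuous_discrete_rng.2 fun b => ?_
    cases b
    · convert (isClosed_setOf_rel p.1 p.2).isOpen_compl
      ext r
      simp [toBool]
    · convert isOpen_setOf_rel p.1 p.2
      ext r
      simp [toBool]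
  · rintro _ ⟨a, b, rfl⟩
    refine isOpen_induced_iff.2 ⟨{f | f (a, b) = true}, ?_, ?_⟩
    · exact (isClopen_setOf_apply_eq_true (a, b)).isOpen
    · ext r
      exact toBool_eq_true

lemma range_toBool :
    Set.range (toBool (S := S)) = {f | IsTotalOrdering fun a b => f (a, b) = true} := by
  ext f
  constructor
  · rintro ⟨r, rfl⟩
    simp only [Set.mem_ofPred_eq, toBool_eq_true]
    exact r.2
  · intro hf
    refine ⟨⟨fun a b => f (a, b) = true, hf⟩, funext fun p => ?_⟩
    simp [toBool]

lemma isClosed_setOf_isTotalOrdering :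
    IsClosed {f : S × S → Bool | IsTotalOrdering fun a b => f (a, b) = true} := by
  have hopen (p : S × S) := (isClopen_setOf_apply_eq_true p).isOpen
  have hclosed (p : S × S) := (isClopen_setOf_apply_eq_true p).isClosed
  simp only [IsTotalOrdering, Set.ofPred_and, Set.ofPred_forall]
  refine .inter ?_ (.inter ?_ ?_)
  · exact isClosed_iInter fun a => isClosed_iInter fun b =>
      isClosed_imp (hopen _) (isClosed_imp (hopen _) isClosed_const)
  · exact isClosed_iInter fun a => isClosed_iInter fun b => isClosed_iInter fun c =>
      isClosed_imp (hopen _) (isClosed_imp (hopen _) (hclosed _))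
  · exact isClosed_iInter fun a => isClosed_iInter fun b => (hclosed _).union (hclosed _)

lemma isClosedEmbedding_toBool : IsClosedEmbedding (toBool (S := S)) :=
  ⟨⟨isInducing_toBool, toBool_injective⟩, range_toBool ▸ isClosed_setOf_isTotalOrdering⟩

instance compactSpace : CompactSpace (TO S) :=
  isClosedEmbedding_toBool.compactSpace

end TO

section LeadingMonomials

variable {K : Type*} [Field K] {t : ℕ} {LM : TO (Mon t) → MvPolynomial (Fin t) K → Mon t}

lemma LMideal_le_iff {r : TO (Mon t)} {E : Set (MvPolynomial (Fin t) K)}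
    {J : Ideal (MvPolynomial (Fin t) K)} :
    LMideal K t LM r E ≤ J ↔ ∀ e ∈ E, e ≠ 0 → MvPolynomial.monomial (LM r e) 1 ∈ J := by
  rw [LMideal, Ideal.span_le]
  constructor
  · exact fun h e heE he => h ⟨e, heE, he, rfl⟩
  · rintro h _ ⟨e, heE, he, rfl⟩
    exact h e heE he

lemma monomial_LM_mem_LMideal (r : TO (Mon t)) {E : Set (MvPolynomial (Fin t) K)}
    {e : MvPolynomial (Fin t) K} (heE : e ∈ E) (he : e ≠ 0) :
    MvPolynomial.monomial (LM r e) 1 ∈ LMideal K t LM r E :=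
  LMideal_le_iff.1 le_rfl e heE he

variable (hLM : IsLM K t LM)
include hLM

lemma eventually_LM_eq (r : TO (Mon t)) {e : MvPolynomial (Fin t) K} (he : e ≠ 0) :
    ∀ᶠ s in 𝓝 r, LM s e = LM r e := by
  have hmax : ∀ᶠ s in 𝓝 r, ∀ m ∈ e.support, s.1 m (LM r e) :=
    (eventually_all_finset _).2 fun m hm => TO.eventually_rel ((hLM r e he).2 m hm)
  filter_upwards [hmax] with s hs
  exact s.2.1 _ _ (hs _ (hLM s e he).1) ((hLM s e he).2 _ (hLM r e he).1)

lemma eventually_LMideal_le (r : TO (Mon t)) (E : Set (MvPolynomial (Fin t) K)) :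
    ∀ᶠ s in 𝓝 r, LMideal K t LM r E ≤ LMideal K t LM s E := by
  obtain ⟨F, hFsub, hF⟩ := (Submodule.fg_span_iff_fg_span_finset_subset _).1
    (IsNoetherian.noetherian (LMideal K t LM r E))
  have hgen : ∀ q ∈ F, ∀ᶠ s in 𝓝 r, q ∈ LMideal K t LM s E := by
    intro q hq
    obtain ⟨e, heE, he, rfl⟩ := hFsub hq
    filter_upwards [eventually_LM_eq hLM r he] with s hs
    exact hs ▸ monomial_LM_mem_LMideal s heE he
  filter_upwards [(eventually_all_finset F).2 hgen] with s hs
  rw [LMideal, Ideal.span, hF, Submodule.span_le]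
  exact hs

lemma eventually_notMem_MINset {E : Set (MvPolynomial (Fin t) K)} {S : Set (TO (Mon t))}
    {r : TO (Mon t)} (hrS : r ∈ S) (hr : r ∉ MINset K t LM E S) :
    ∀ᶠ s in 𝓝 r, s ∉ MINset K t LM E S := by
  obtain ⟨r', hr'S, hle, hne⟩ : ∃ r' ∈ S, LMideal K t LM r' E ≤ LMideal K t LM r E ∧
      LMideal K t LM r' E ≠ LMideal K t LM r E := by
    simpa [MINset, hrS] using hr
  obtain ⟨e, heE, he, hnotMem⟩ : ∃ e ∈ E, e ≠ 0 ∧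
      MvPolynomial.monomial (LM r e) 1 ∉ LMideal K t LM r' E := by
    by_contra! h
    exact hne (hle.antisymm (LMideal_le_iff.2 h))
  filter_upwards [eventually_LMideal_le hLM r E, eventually_LM_eq hLM r he] with s hs hse hmin
  have hr's : LMideal K t LM r' E = LMideal K t LM s E := hmin.2 r' hr'S (hle.trans hs)
  exact hnotMem (hr's ▸ hse ▸ monomial_LM_mem_LMideal s heE he)

end LeadingMonomials

theorem MINset_isClosed_isCompact_general (K : Type*) [Field K] (t : ℕ)
    (LM : TO (Mon t) → MvPolynomial (Fin t) K → Mon t) (hLM : IsLM K t LM)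
    (E : Set (MvPolynomial (Fin t) K)) (S : Set (TO (Mon t))) :
    IsClosed {x : S | (x : TO (Mon t)) ∈ MINset K t LM E S} ∧
    (IsClosed S → IsCompact (MINset K t LM E S)) := by
  have hclosed : IsClosed {x : S | (x : TO (Mon t)) ∈ MINset K t LM E S} := by
    refine isOpen_compl_iff.1 (isOpen_iff_eventually.2 fun x hx => ?_)
    exact continuous_subtype_val.continuousAt.eventually (eventually_notMem_MINset hLM x.2 hx)
  refine ⟨hclosed, fun hS => ?_⟩
  have himage : Subtype.val '' {x : S | (x : TO (Mon t)) ∈ MINset K t LM E S} =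
      MINset K t LM E S :=
    (Subtype.image_preimage_coe S _).trans (Set.inter_eq_right.2 fun _ hr => hr.1)
  exact himage ▸ (hS.isClosedMap_subtype_val _ hclosed).isCompact

/-- For `E ⊆ K[X]` and `𝔖 ⊆ TO(M)`, the set `MIN_E(𝔖)` of minimalizers of `E` in `𝔖` is a
closed subset of `𝔖` (in the subspace topology); hence, if `𝔖` is closed in `TO(M)`, then
`MIN_E(𝔖)` is compact. -/
theorem MINset_isClosed_isCompact (K : Type*) [Field K] (t : ℕ) (ht : 1 ≤ t)
    (LM : TO (Mon t) → MvPolynomial (Fin t) K → Mon t) (hLM : IsLM K t LM)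
    (E : Set (MvPolynomial (Fin t) K)) (S : Set (TO (Mon t))) :
    IsClosed {x : S | (x : TO (Mon t)) ∈ MINset K t LM E S} ∧
    (IsClosed S → IsCompact (MINset K t LM E S)) :=
  MINset_isClosed_isCompact_general K t LM hLM E S
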